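/- arXiv:1602.02114 — 3 statements merged into one kernel-verified Lean document; each statement's English description precedes it below -/
import Mathlib

section
/- Let p ≥ 1, let F be a probability measure on [0,∞)^p with ∫ ‖β‖² F(dβ) < ∞, let γ₁,…,γ_p ≥ 0, and let ρ₀ be a Lévy measure on (0,∞) with ρ̄₀(x) ∼ x^{-σ} ℓ(1/x) as x → 0⁺, where σ ∈ (0,1) and ℓ is slowly varying at infinity with lim_{t→∞} ℓ(t) > 0 allowed to be any positive limit behaviour of a slowly varying function. For ε > 0 let ρ_ε be the compound Lévy measure built from (F, ρ₀ restricted to (0,ε), γ), and set b_ε = ε^{1-σ/2} √(ℓ(1/ε)). Then for every κ > 0, (1/b_ε²) ∫_{{w ∈ [0,∞)^p : ‖w‖ > κ b_ε}} ‖w‖² ρ_ε(dw) → 0 as ε → 0⁺. -/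
open MeasureTheory Filter Set Real Topology

/-- The compound Lévy measure on `[0,∞)^p` built from a score distribution `F` on `[0,∞)^p`,
a base Lévy measure `ρ₀` on `(0,∞)` and exponential tilting parameters `γ₁,…,γ_p ≥ 0`: the
pushforward of `e^{-w₀ Σ_k γ_k β_k} F(dβ) ρ₀(dw₀)` on `(0,∞) × [0,∞)^p` under the map
`(w₀, β) ↦ (w₀ β₁, …, w₀ β_p)`. -/
noncomputable def compoundLevy {p : ℕ} (F : Measure (Fin p → ℝ)) (ρ₀ : Measure ℝ)
    (γ : Fin p → ℝ) : Measure (Fin p → ℝ) :=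
  Measure.map (fun q : ℝ × (Fin p → ℝ) => fun k => q.1 * q.2 k)
    (((ρ₀.restrict (Set.Ioi 0)).prod F).withDensity
      fun q => ENNReal.ofReal (Real.exp (-q.1 * ∑ k, γ k * q.2 k)))

/-!
Write a jump of `ρ_ε` as `w = w₀ β` with size `w₀ ∈ (0, ε)` and direction `β ∼ F`; the tilting
factor is at most one. Since `w₀ < ε`, the event `‖w‖ > κ b_ε` forces
`‖β‖² > κ² b_ε² / ε² = κ² φ(ε)` with `φ(x) = x^{-σ} ℓ(1/x)`, so the truncated second moment of `ρ_ε`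
is at most `(∫_{(0,ε)} w₀² ρ₀(dw₀)) · ∫_{‖β‖² > κ² φ(ε)} ‖β‖² F(dβ)`.

Cutting `(0, ε)` into the dyadic pieces `(ε/2^{n+1}, ε/2^n]` and using `ℓ(2t) ≤ 2 ℓ(t)` for
large `t` bounds the first factor by a geometric series of ratio `2^{σ-1} < 1`, i.e. by
`O(ε² φ(ε)) = O(b_ε²)`. For the second factor, `φ` grows at least by the factor `2^{σ/2}` along
`ε/2^n` and is comparable to the monotone tail `ρ̄₀`, hence `φ(ε) → ∞`; the finite second moment
of `F` then makes it vanish.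
-/

open scoped ENNReal

lemma le_pow_mul_of_forall_le_mul {f : ℝ → ℝ} {a C T t : ℝ} (ha : 1 ≤ a) (hC : 0 ≤ C)
    (h : ∀ s ≥ T, f (a * s) ≤ C * f s) (ht₀ : 0 ≤ t) (ht : T ≤ t) (n : ℕ) :
    f (a ^ n * t) ≤ C ^ n * f t := by
  induction n with
  | zero => simp
  | succ n ih =>
    have hT : T ≤ a ^ n * t := ht.trans (le_mul_of_one_le_left ht₀ (one_le_pow₀ ha))
    calc f (a ^ (n + 1) * t) = f (a * (a ^ n * t)) := by ring_nf
      _ ≤ C * f (a ^ n * t) := h _ hT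
      _ ≤ C * (C ^ n * f t) := by gcongr
      _ = C ^ (n + 1) * f t := by ring

lemma eventually_mul_lt_comp_two_mul_lt {ℓ : ℝ → ℝ} (hℓ : ∀ t > 0, 0 < ℓ t)
    (hℓ₂ : Tendsto (fun t => ℓ (2 * t) / ℓ t) atTop (𝓝 1)) {c C : ℝ} (hc : c < 1) (hC : 1 < C) :
    ∀ᶠ t in atTop, c * ℓ t < ℓ (2 * t) ∧ ℓ (2 * t) < C * ℓ t := by
  filter_upwards [hℓ₂.eventually (Ioo_mem_nhds hc hC), eventually_gt_atTop 0] with t ht ht₀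
  rw [lt_div_iff₀ (hℓ t ht₀), div_lt_iff₀ (hℓ t ht₀)] at ht
  exact ht

lemma div_two_pow_rpow_neg {x : ℝ} (hx : 0 ≤ x) (σ : ℝ) (n : ℕ) :
    (x / 2 ^ n) ^ (-σ) = (2 ^ σ) ^ n * x ^ (-σ) := by
  rw [Real.div_rpow hx (by positivity), Real.rpow_neg (by positivity : (0 : ℝ) ≤ 2 ^ n) σ,
    div_inv_eq_mul, ← Real.rpow_pow_comm zero_le_two, mul_comm]

lemma eventually_le_ofReal_two_mul_and_le_two_mul_toReal {α : Type*} {l : Filter α}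
    {f : α → ℝ≥0∞} {g : α → ℝ} (hg : ∀ᶠ x in l, 0 < g x)
    (h : Tendsto (fun x => (f x).toReal / g x) l (𝓝 1)) :
    ∀ᶠ x in l, f x ≤ ENNReal.ofReal (2 * g x) ∧ g x ≤ 2 * (f x).toReal := by
  filter_upwards [hg, h.eventually (Ioo_mem_nhds (by norm_num : (1 / 2 : ℝ) < 1) one_lt_two)]
    with x hgx hx
  rw [lt_div_iff₀ hgx, div_lt_iff₀ hgx] at hx
  have hf : f x ≠ ⊤ := by
    refine (ENNReal.toReal_pos_iff.1 ?_).2.ne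
    nlinarith
  exact ⟨(ENNReal.ofReal_toReal hf).symm.trans_le (ENNReal.ofReal_le_ofReal hx.2.le),
    by linarith⟩

lemma tendsto_nhdsGT_atTop_of_antitone_comparable {φ : ℝ → ℝ} {G : ℝ → ℝ≥0∞} (hG : Antitone G)
    (hφG : ∀ᶠ x in 𝓝[>] (0 : ℝ), G x ≤ ENNReal.ofReal (2 * φ x) ∧ φ x ≤ 2 * (G x).toReal)
    (hφ : ∀ M, ∃ᶠ x in 𝓝[>] (0 : ℝ), M ≤ φ x) :
    Tendsto φ (𝓝[>] 0) atTop := by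
  obtain ⟨x₁, hx₁, hbound⟩ := mem_nhdsGT_iff_exists_Ioo_subset.1 hφG
  refine tendsto_atTop.2 fun M => ?_
  -- `4` absorbs the two comparison constants, `max M 1` forces `φ y > 0`
  obtain ⟨y, hyM, hy⟩ := ((hφ (4 * max M 1)).and_eventually (Ioo_mem_nhdsGT hx₁)).exists
  filter_upwards [Ioo_mem_nhdsGT hy.1] with x hx
  have hx' := hbound (⟨hx.1, hx.2.trans hy.2⟩ : x ∈ Ioo 0 x₁)
  have hGyx : (G y).toReal ≤ (G x).toReal :=
    ENNReal.toReal_mono (ne_top_of_le_ne_top ENNReal.ofReal_ne_top hx'.1) (hG hx.2.le)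
  have hGx : (G x).toReal ≤ max (2 * φ x) 0 :=
    (ENNReal.toReal_mono ENNReal.ofReal_ne_top hx'.1).trans_eq ENNReal.toReal_ofReal'
  have := (hbound hy).2
  have := le_max_left M 1
  have := le_max_right M 1
  rcases max_cases (2 * φ x) 0 with ⟨h, -⟩ | ⟨h, -⟩ <;> linarith

lemma frequently_le_rpow_mul_atTop {σ : ℝ} (hσ : 0 < σ) {ℓ : ℝ → ℝ} (hℓ : ∀ t > 0, 0 < ℓ t)
    (hℓ₂ : Tendsto (fun t => ℓ (2 * t) / ℓ t) atTop (𝓝 1)) (M : ℝ) :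
    ∃ᶠ t in atTop, M ≤ t ^ σ * ℓ t := by
  have hc : (2 : ℝ) ^ (-(σ / 2)) < 1 := Real.rpow_lt_one_of_one_lt_of_neg one_lt_two (by linarith)
  have hq : (1 : ℝ) < 2 ^ (σ / 2) := Real.one_lt_rpow one_lt_two (by linarith)
  obtain ⟨T, hT⟩ := eventually_atTop.1 (eventually_mul_lt_comp_two_mul_lt hℓ hℓ₂ hc one_lt_two)
  set t₀ := max T 1
  have ht₀ : 0 < t₀ := lt_max_of_lt_right one_pos
  -- stated for `-(s ^ σ * ℓ s)` so that `le_pow_mul_of_forall_le_mul` yields a lower bound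
  have hgrowth : ∀ s ≥ t₀, -((2 * s) ^ σ * ℓ (2 * s)) ≤ 2 ^ (σ / 2) * -(s ^ σ * ℓ s) := by
    intro s hs
    have hs₀ : 0 < s := ht₀.trans_le hs
    have h := (hT s ((le_max_left _ _).trans hs)).1
    have hsplit : (2 : ℝ) ^ (σ / 2) = 2 ^ σ * 2 ^ (-(σ / 2)) := by
      rw [← Real.rpow_add two_pos]; ring_nf
    rw [Real.mul_rpow zero_le_two hs₀.le, hsplit]
    have : 0 < (2 : ℝ) ^ σ * s ^ σ := by positivity
    nlinarith
  have hseq : ∀ n : ℕ, (2 ^ (σ / 2)) ^ n * (t₀ ^ σ * ℓ t₀) ≤ (2 ^ n * t₀) ^ σ * ℓ (2 ^ n * t₀) :=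
    fun n => by
      have := le_pow_mul_of_forall_le_mul (f := fun s => -(s ^ σ * ℓ s)) one_le_two
        (by positivity) hgrowth ht₀.le le_rfl n
      linarith
  have hlim : Tendsto (fun n : ℕ => (2 ^ (σ / 2)) ^ n * (t₀ ^ σ * ℓ t₀)) atTop atTop :=
    (tendsto_pow_atTop_atTop_of_one_lt hq).atTop_mul_const (by have := hℓ t₀ ht₀; positivity)
  refine ((tendsto_pow_atTop_atTop_of_one_lt one_lt_two).atTop_mul_const ht₀).frequently ?_
  exact ((tendsto_atTop.1 hlim M).mono fun n hn => hn.trans (hseq n)).frequently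

lemma tendsto_rpow_neg_mul_nhdsGT_atTop {ρ : Measure ℝ} {σ : ℝ} (hσ : 0 < σ) {ℓ : ℝ → ℝ}
    (hℓ : ∀ t > 0, 0 < ℓ t) (hℓ₂ : Tendsto (fun t => ℓ (2 * t) / ℓ t) atTop (𝓝 1))
    (htail : ∀ᶠ x in 𝓝[>] (0 : ℝ), ρ (Ioi x) ≤ ENNReal.ofReal (2 * (x ^ (-σ) * ℓ (1 / x))) ∧
      x ^ (-σ) * ℓ (1 / x) ≤ 2 * (ρ (Ioi x)).toReal) :
    Tendsto (fun x => x ^ (-σ) * ℓ (1 / x)) (𝓝[>] 0) atTop := by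
  refine tendsto_nhdsGT_atTop_of_antitone_comparable
    (fun _ _ h => measure_mono (Ioi_subset_Ioi h)) htail fun M => ?_
  refine tendsto_inv_atTop_nhdsGT_zero.frequently ?_
  refine ((frequently_le_rpow_mul_atTop hσ hℓ hℓ₂ M).and_eventually (eventually_gt_atTop 0)).mono ?_
  rintro t ⟨ht, ht₀⟩
  rwa [Real.inv_rpow ht₀.le, Real.rpow_neg ht₀.le, inv_inv, one_div, inv_inv]

lemma lintegral_Ioo_sq_le_of_tail_le {ρ : Measure ℝ} {ε B q : ℝ} (hε : 0 < ε) (hB : 0 ≤ B)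
    (hq₀ : 0 ≤ q) (hq : q < 4)
    (h : ∀ n : ℕ, ρ (Ioi (ε / 2 ^ (n + 1))) ≤ ENNReal.ofReal (B * q ^ n)) :
    ∫⁻ w in Ioo 0 ε, ENNReal.ofReal (w ^ 2) ∂ρ ≤ ENNReal.ofReal (ε ^ 2 * B / (1 - q / 4)) := by
  have hcover : Ioo 0 ε ⊆ ⋃ n : ℕ, Ioc (ε / 2 ^ (n + 1)) (ε / 2 ^ n) := by
    rintro w ⟨hw₀, hwε⟩
    obtain ⟨n, hn, hn'⟩ := exists_nat_pow_near ((one_le_div hw₀).2 hwε.le) one_lt_two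
    rw [le_div_iff₀ hw₀] at hn
    rw [div_lt_iff₀ hw₀] at hn'
    exact mem_iUnion.2 ⟨n, (div_lt_iff₀ (by positivity)).2 (by linarith),
      (le_div_iff₀ (by positivity)).2 (by linarith)⟩
  have hterm : ∀ n : ℕ, ∫⁻ w in Ioc (ε / 2 ^ (n + 1)) (ε / 2 ^ n), ENNReal.ofReal (w ^ 2) ∂ρ ≤
      ENNReal.ofReal (ε ^ 2 * B * (q / 4) ^ n) := fun n =>
    calc _ ≤ ∫⁻ _ in Ioc (ε / 2 ^ (n + 1)) (ε / 2 ^ n), ENNReal.ofReal ((ε / 2 ^ n) ^ 2) ∂ρ :=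
          setLIntegral_mono measurable_const fun w hw => ENNReal.ofReal_le_ofReal
            (pow_le_pow_left₀ ((div_pos hε (by positivity)).trans hw.1).le hw.2 2)
      _ = ENNReal.ofReal ((ε / 2 ^ n) ^ 2) * ρ (Ioc (ε / 2 ^ (n + 1)) (ε / 2 ^ n)) :=
          setLIntegral_const _ _
      _ ≤ ENNReal.ofReal ((ε / 2 ^ n) ^ 2) * ENNReal.ofReal (B * q ^ n) := by
          gcongr
          exact (measure_mono Ioc_subset_Ioi_self).trans (h n)
      _ = ENNReal.ofReal (ε ^ 2 * B * (q / 4) ^ n) := by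
          rw [← ENNReal.ofReal_mul (by positivity)]
          congr 1
          rw [div_pow, div_pow, ← pow_mul, mul_comm n 2, pow_mul]
          field_simp
          norm_num
          ring
  have hr : q / 4 < 1 := by linarith
  calc ∫⁻ w in Ioo 0 ε, ENNReal.ofReal (w ^ 2) ∂ρ
      ≤ ∑' n : ℕ, ∫⁻ w in Ioc (ε / 2 ^ (n + 1)) (ε / 2 ^ n), ENNReal.ofReal (w ^ 2) ∂ρ :=
        (lintegral_mono_set hcover).trans (lintegral_iUnion_le _ _)
    _ ≤ ∑' n : ℕ, ENNReal.ofReal (ε ^ 2 * B * (q / 4) ^ n) := ENNReal.tsum_le_tsum hterm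
    _ = ENNReal.ofReal (∑' n : ℕ, ε ^ 2 * B * (q / 4) ^ n) :=
        (ENNReal.ofReal_tsum_of_nonneg (fun n => by positivity)
          ((summable_geometric_of_lt_one (by positivity) hr).mul_left _)).symm
    _ = ENNReal.ofReal (ε ^ 2 * B / (1 - q / 4)) := by
        rw [tsum_mul_left, tsum_geometric_of_lt_one (by positivity) hr, ← div_eq_mul_inv]

lemma exists_eventually_lintegral_Ioo_sq_le {ρ : Measure ℝ} {σ : ℝ} (hσ : σ < 1) {ℓ : ℝ → ℝ}
    (hℓ : ∀ t > 0, 0 < ℓ t) (hℓ₂ : Tendsto (fun t => ℓ (2 * t) / ℓ t) atTop (𝓝 1))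
    (htail : ∀ᶠ x in 𝓝[>] (0 : ℝ), ρ (Ioi x) ≤ ENNReal.ofReal (2 * (x ^ (-σ) * ℓ (1 / x)))) :
    ∃ C : ℝ, ∀ᶠ ε in 𝓝[>] (0 : ℝ), ∫⁻ w in Ioo 0 ε, ENNReal.ofReal (w ^ 2) ∂ρ ≤
      ENNReal.ofReal (C * (ε ^ 2 * (ε ^ (-σ) * ℓ (1 / ε)))) := by
  obtain ⟨x₁, hx₁, hρ⟩ := mem_nhdsGT_iff_exists_Ioo_subset.1 htail
  obtain ⟨T, hT⟩ :=
    eventually_atTop.1 (eventually_mul_lt_comp_two_mul_lt hℓ hℓ₂ zero_lt_one one_lt_two)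
  have hq : 2 * 2 ^ σ < (4 : ℝ) := by
    have := Real.rpow_lt_rpow_of_exponent_lt one_lt_two hσ
    rw [Real.rpow_one] at this
    linarith
  refine ⟨4 * 2 ^ σ / (1 - 2 * 2 ^ σ / 4), ?_⟩
  filter_upwards [Ioo_mem_nhdsGT hx₁, tendsto_inv_nhdsGT_zero.eventually (eventually_ge_atTop T)]
    with ε hε hεT
  have hε₀ : 0 < ε := hε.1
  have hℓε : 0 < ℓ (1 / ε) := hℓ _ (by positivity)
  have hℓpow : ∀ n : ℕ, ℓ (2 ^ n * (1 / ε)) ≤ 2 ^ n * ℓ (1 / ε) :=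
    le_pow_mul_of_forall_le_mul one_le_two zero_le_two (fun s hs => (hT s hs).2.le)
      (by positivity) (by rwa [one_div])
  refine (lintegral_Ioo_sq_le_of_tail_le (B := 4 * 2 ^ σ * (ε ^ (-σ) * ℓ (1 / ε)))
    hε₀ (by positivity) (by positivity) hq fun n => ?_).trans_eq (by ring_nf)
  have hx : ε / 2 ^ (n + 1) ∈ Ioo 0 x₁ :=
    ⟨by positivity, (div_le_self hε₀.le (one_le_pow₀ one_le_two)).trans_lt hε.2⟩
  refine (hρ hx).trans (ENNReal.ofReal_le_ofReal ?_)
  rw [div_two_pow_rpow_neg hε₀.le, one_div_div, div_eq_mul_one_div]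
  calc 2 * ((2 ^ σ) ^ (n + 1) * ε ^ (-σ) * ℓ (2 ^ (n + 1) * (1 / ε)))
      ≤ 2 * ((2 ^ σ) ^ (n + 1) * ε ^ (-σ) * (2 ^ (n + 1) * ℓ (1 / ε))) := by
        gcongr
        exact hℓpow (n + 1)
    _ = 4 * 2 ^ σ * (ε ^ (-σ) * ℓ (1 / ε)) * (2 * 2 ^ σ) ^ n := by ring

lemma tendsto_setLIntegral_setOf_lt_atTop {α : Type*} [MeasurableSpace α] {μ : Measure α}
    {f : α → ℝ≥0∞} {g : α → ℝ} (hg : Measurable g) (hf : ∫⁻ x, f x ∂μ ≠ ⊤) :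
    Tendsto (fun M => ∫⁻ x in {x | M < g x}, f x ∂μ) atTop (𝓝 0) := by
  have : IsFiniteMeasure (μ.withDensity f) := isFiniteMeasure_withDensity hf
  have hsets : ∀ M : ℝ, MeasurableSet {x | M < g x} := fun M => measurableSet_lt measurable_const hg
  have hInter : ⋂ M : ℝ, {x | M < g x} = ∅ :=
    iInter_eq_empty_iff.2 fun x => ⟨g x, lt_irrefl (g x)⟩
  have h := tendsto_measure_iInter_atTop (μ := μ.withDensity f)
    (fun M => (hsets M).nullMeasurableSet) (fun _ _ hMN _ hx => hMN.trans_lt hx)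
    ⟨0, measure_ne_top _ _⟩
  rw [hInter, measure_empty] at h
  exact h.congr fun M => withDensity_apply _ (hsets M)

lemma lintegral_compoundLevy_le {p : ℕ} {F : Measure (Fin p → ℝ)}
    (hF : F {β | ∃ m, β m < 0} = 0) {γ : Fin p → ℝ} (hγ : ∀ m, 0 ≤ γ m) (ρ : Measure ℝ)
    {f : (Fin p → ℝ) → ℝ≥0∞} (hf : Measurable f) :
    ∫⁻ w, f w ∂compoundLevy F ρ γ ≤
      ∫⁻ q, f (fun k => q.1 * q.2 k) ∂((ρ.restrict (Ioi 0)).prod F) := by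
  have hmul : Measurable fun q : ℝ × (Fin p → ℝ) => fun k => q.1 * q.2 k :=
    measurable_pi_lambda _ fun k => measurable_fst.mul ((measurable_pi_apply k).comp measurable_snd)
  have hdens : Measurable fun q : ℝ × (Fin p → ℝ) =>
      ENNReal.ofReal (Real.exp (-q.1 * ∑ k, γ k * q.2 k)) := by fun_prop
  rw [compoundLevy, lintegral_map hf hmul, lintegral_withDensity_eq_lintegral_mul _ hdens
    (show Measurable fun q : ℝ × (Fin p → ℝ) => f fun k => q.1 * q.2 k from hf.comp hmul)]
  have hfst : ∀ᵐ q ∂((ρ.restrict (Ioi 0)).prod F), 0 < q.1 :=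
    Measure.quasiMeasurePreserving_fst.ae (ae_restrict_mem (μ := ρ) measurableSet_Ioi)
  have hF' : ∀ᵐ β ∂F, ∀ m, 0 ≤ β m := measure_mono_null (fun β hβ => by simpa using hβ) hF
  have hsnd : ∀ᵐ q ∂((ρ.restrict (Ioi 0)).prod F), ∀ m, 0 ≤ q.2 m :=
    Measure.quasiMeasurePreserving_snd.ae hF'
  refine lintegral_mono_ae ?_
  filter_upwards [hfst, hsnd] with q hq₁ hq₂
  have htilt : -q.1 * ∑ k, γ k * q.2 k ≤ 0 :=
    mul_nonpos_of_nonpos_of_nonneg (neg_nonpos.2 hq₁.le)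
      (Finset.sum_nonneg fun k _ => mul_nonneg (hγ k) (hq₂ k))
  calc ENNReal.ofReal (Real.exp (-q.1 * ∑ k, γ k * q.2 k)) * f (fun k => q.1 * q.2 k)
      ≤ 1 * f (fun k => q.1 * q.2 k) := by
        gcongr
        exact ENNReal.ofReal_le_one.2 (Real.exp_le_one_iff.2 htilt)
    _ = f (fun k => q.1 * q.2 k) := one_mul _

lemma setLIntegral_compoundLevy_restrict_Ioo_le {p : ℕ} {F : Measure (Fin p → ℝ)} [SFinite F]
    (hF : F {β | ∃ m, β m < 0} = 0) {γ : Fin p → ℝ} (hγ : ∀ m, 0 ≤ γ m) (ρ : Measure ℝ)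
    {ε r : ℝ} (hε : 0 < ε) (hr : 0 ≤ r) :
    ∫⁻ w in {w : Fin p → ℝ | r < √(∑ m, w m ^ 2)}, ENNReal.ofReal (∑ m, w m ^ 2)
        ∂compoundLevy F (ρ.restrict (Ioo 0 ε)) γ ≤
      (∫⁻ w in Ioo 0 ε, ENNReal.ofReal (w ^ 2) ∂ρ) *
        ∫⁻ β in {β : Fin p → ℝ | (r / ε) ^ 2 < ∑ m, β m ^ 2}, ENNReal.ofReal (∑ m, β m ^ 2) ∂F := by
  set S := {w : Fin p → ℝ | r < √(∑ m, w m ^ 2)}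
  set S' := {β : Fin p → ℝ | (r / ε) ^ 2 < ∑ m, β m ^ 2}
  set g := fun β : Fin p → ℝ => ENNReal.ofReal (∑ m, β m ^ 2)
  have hsq : Measurable fun w : Fin p → ℝ => ∑ m, w m ^ 2 := by fun_prop
  have hS : MeasurableSet S := measurableSet_lt measurable_const (by fun_prop)
  have hS' : MeasurableSet S' := measurableSet_lt measurable_const hsq
  have hg : Measurable g := ENNReal.measurable_ofReal.comp hsq
  set ρε := (ρ.restrict (Ioo 0 ε)).restrict (Ioi 0)
  have hIoo : ∀ᵐ q ∂ρε.prod F, q.1 ∈ Ioo 0 ε :=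
    Measure.quasiMeasurePreserving_fst.ae (ae_restrict_of_ae (ae_restrict_mem measurableSet_Ioo))
  have hpoint : ∀ a ∈ Ioo 0 ε, ∀ β, S.indicator g (fun k => a * β k) ≤
      ENNReal.ofReal (a ^ 2) * S'.indicator g β := by
    intro a ha β
    by_cases hmem : (fun k => a * β k) ∈ S
    · have hsum : ∑ m, (a * β m) ^ 2 = a ^ 2 * ∑ m, β m ^ 2 := by
        rw [Finset.mul_sum]; simp only [mul_pow]
      have hβ : β ∈ S' := by
        have h := (Real.lt_sqrt hr).1 hmem
        rw [hsum] at h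
        have ha2 : a ^ 2 ≤ ε ^ 2 := pow_le_pow_left₀ ha.1.le ha.2.le 2
        have hβ0 : 0 ≤ ∑ m, β m ^ 2 := by positivity
        rw [mem_ofPred_eq, div_pow, div_lt_iff₀ (by positivity)]
        nlinarith
      rw [indicator_of_mem hmem, indicator_of_mem hβ]
      simp only [g, hsum, ENNReal.ofReal_mul (sq_nonneg a), le_rfl]
    · rw [indicator_of_notMem hmem]
      exact zero_le
  rw [← lintegral_indicator hS, ← lintegral_indicator hS']
  calc _ ≤ ∫⁻ q, S.indicator g (fun k => q.1 * q.2 k) ∂ρε.prod F :=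
        lintegral_compoundLevy_le hF hγ _ (hg.indicator hS)
    _ ≤ ∫⁻ q, ENNReal.ofReal (q.1 ^ 2) * S'.indicator g q.2 ∂ρε.prod F :=
        lintegral_mono_ae (hIoo.mono fun q hq => hpoint q.1 hq q.2)
    _ = (∫⁻ w, ENNReal.ofReal (w ^ 2) ∂ρε) * ∫⁻ β, S'.indicator g β ∂F :=
        lintegral_prod_mul (ENNReal.measurable_ofReal.comp (measurable_id.pow_const 2)).aemeasurable
          (hg.indicator hS').aemeasurable
    _ ≤ _ := by
        gcongr
        exact Measure.restrict_le_self

lemma rpow_one_sub_half_mul_sqrt_sq {ε : ℝ} (hε : 0 < ε) (σ : ℝ) {L : ℝ} (hL : 0 ≤ L) :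
    (ε ^ (1 - σ / 2) * √L) ^ 2 = ε ^ 2 * (ε ^ (-σ) * L) := by
  rw [mul_pow, Real.sq_sqrt hL, ← Real.rpow_natCast, ← Real.rpow_mul hε.le, ← Real.rpow_natCast ε,
    ← mul_assoc, ← Real.rpow_add hε]
  congr 2
  push_cast
  ring

theorem small_jumps_lindeberg_general (p : ℕ)
    (F : Measure (Fin p → ℝ)) [IsProbabilityMeasure F]
    (hFsupp : F {β | ∃ m, β m < 0} = 0)
    (hFmom : Integrable (fun β => ∑ m, (β m) ^ 2) F)
    (γ : Fin p → ℝ) (hγ : ∀ m, 0 ≤ γ m)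
    (ρ₀ : Measure ℝ)
    (σ : ℝ) (hσ : σ ∈ Set.Ioo (0 : ℝ) 1) (ℓ : ℝ → ℝ)
    (hℓpos : ∀ t > (0 : ℝ), 0 < ℓ t)
    (hℓslow : ∀ a > (0 : ℝ), Tendsto (fun t => ℓ (a * t) / ℓ t) atTop (𝓝 1))
    (htail : Tendsto (fun x => (ρ₀ (Set.Ioi x)).toReal / (x ^ (-σ) * ℓ (1 / x)))
      (𝓝[>] (0 : ℝ)) (𝓝 1))
    (κ : ℝ) (hκ : 0 < κ) :
    Tendsto (fun ε =>
        (∫⁻ w in {w : Fin p → ℝ |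
            Real.sqrt (∑ m, (w m) ^ 2) > κ * (ε ^ (1 - σ / 2) * Real.sqrt (ℓ (1 / ε)))},
          ENNReal.ofReal (∑ m, (w m) ^ 2)
          ∂(compoundLevy F (ρ₀.restrict (Set.Ioo 0 ε)) γ)) /
        ENNReal.ofReal ((ε ^ (1 - σ / 2) * Real.sqrt (ℓ (1 / ε))) ^ 2))
      (𝓝[>] (0 : ℝ)) (𝓝 0) := by
  have hℓ₂ := hℓslow 2 two_pos
  have hφpos : ∀ᶠ x in 𝓝[>] (0 : ℝ), 0 < x ^ (-σ) * ℓ (1 / x) := by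
    filter_upwards [self_mem_nhdsWithin] with x (hx : 0 < x)
    exact mul_pos (Real.rpow_pos_of_pos hx _) (hℓpos _ (one_div_pos.2 hx))
  have hbounds := eventually_le_ofReal_two_mul_and_le_two_mul_toReal hφpos htail
  obtain ⟨C, hC⟩ :=
    exists_eventually_lintegral_Ioo_sq_le hσ.2 hℓpos hℓ₂ (hbounds.mono fun _ h => h.1)
  have hthreshold :
      Tendsto (fun ε => (κ * (ε ^ (1 - σ / 2) * √(ℓ (1 / ε))) / ε) ^ 2) (𝓝[>] 0) atTop := by
    refine ((tendsto_rpow_neg_mul_nhdsGT_atTop hσ.1 hℓpos hℓ₂ hbounds).const_mul_atTop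
      (pow_pos hκ 2)).congr' ?_
    filter_upwards [eventually_mem_nhdsWithin] with ε (hε : 0 < ε)
    rw [div_pow, mul_pow, rpow_one_sub_half_mul_sqrt_sq hε σ (hℓpos _ (one_div_pos.2 hε)).le]
    field_simp
  have hFtail := (tendsto_setLIntegral_setOf_lt_atTop (μ := F)
    (f := fun β => ENNReal.ofReal (∑ m, β m ^ 2)) (g := fun β => ∑ m, β m ^ 2) (by fun_prop)
    hFmom.lintegral_lt_top.ne).comp hthreshold
  have hlim := ENNReal.Tendsto.const_mul hFtail (Or.inr (ENNReal.ofReal_ne_top (r := C)))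
  rw [mul_zero] at hlim
  refine tendsto_of_tendsto_of_tendsto_of_le_of_le' tendsto_const_nhds hlim
    (Eventually.of_forall fun _ => zero_le) ?_
  filter_upwards [hC, eventually_mem_nhdsWithin] with ε hCε (hε : 0 < ε)
  have hℓε := hℓpos _ (one_div_pos.2 hε)
  refine ENNReal.div_le_of_le_mul ?_
  calc _ ≤ _ := setLIntegral_compoundLevy_restrict_Ioo_le hFsupp hγ ρ₀ hε (by positivity)
    _ ≤ ENNReal.ofReal (C * (ε ^ 2 * (ε ^ (-σ) * ℓ (1 / ε)))) * _ := by gcongr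
    _ = _ := by
      rw [rpow_one_sub_half_mul_sqrt_sq hε σ hℓε.le, Function.comp_apply,
        ENNReal.ofReal_mul' (by positivity)]
      ring

/-- Let `F` be a probability measure on `[0,∞)^p` with finite second moment,
`γ_k ≥ 0`, and `ρ₀` a Lévy measure on `(0,∞)` with regularly varying tail
`ρ̄₀(x) ∼ x^(-σ) ℓ(1/x)` as `x → 0⁺`, `σ ∈ (0,1)`, `ℓ` slowly varying at infinity. For
`ε > 0` let `ρ_ε` be the compound Lévy measure built from `(F, ρ₀|_{(0,ε)}, γ)` and set
`b_ε = ε^{1-σ/2} √(ℓ(1/ε))`. Then for every `κ > 0`,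
`(1/b_ε²) ∫_{‖w‖ > κ b_ε} ‖w‖² ρ_ε(dw) → 0` as `ε → 0⁺` (Euclidean norm). -/
theorem small_jumps_lindeberg (p : ℕ) (hp : 1 ≤ p)
    (F : Measure (Fin p → ℝ)) [IsProbabilityMeasure F]
    (hFsupp : F {β | ∃ m, β m < 0} = 0)
    (hFmom : Integrable (fun β => ∑ m, (β m) ^ 2) F)
    (γ : Fin p → ℝ) (hγ : ∀ m, 0 ≤ γ m)
    (ρ₀ : Measure ℝ) (hρ₀supp : ρ₀ (Set.Iic 0) = 0)
    (hρ₀levy : ∫⁻ w in Set.Ioi (0 : ℝ), ENNReal.ofReal (min 1 w) ∂ρ₀ < ⊤)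
    (σ : ℝ) (hσ : σ ∈ Set.Ioo (0 : ℝ) 1) (ℓ : ℝ → ℝ)
    (hℓpos : ∀ t > (0 : ℝ), 0 < ℓ t)
    (hℓslow : ∀ a > (0 : ℝ), Tendsto (fun t => ℓ (a * t) / ℓ t) atTop (𝓝 1))
    (htail : Tendsto (fun x => (ρ₀ (Set.Ioi x)).toReal / (x ^ (-σ) * ℓ (1 / x)))
      (𝓝[>] (0 : ℝ)) (𝓝 1))
    (κ : ℝ) (hκ : 0 < κ) :
    Tendsto (fun ε =>
        (∫⁻ w in {w : Fin p → ℝ |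
            Real.sqrt (∑ m, (w m) ^ 2) > κ * (ε ^ (1 - σ / 2) * Real.sqrt (ℓ (1 / ε)))},
          ENNReal.ofReal (∑ m, (w m) ^ 2)
          ∂(compoundLevy F (ρ₀.restrict (Set.Ioo 0 ε)) γ)) /
        ENNReal.ofReal ((ε ^ (1 - σ / 2) * Real.sqrt (ℓ (1 / ε))) ^ 2))
      (𝓝[>] (0 : ℝ)) (𝓝 0) :=
  small_jumps_lindeberg_general p F hFsupp hFmom γ hγ ρ₀ σ hσ ℓ hℓpos hℓslow htail κ hκ
end

section
/- Let p ≥ 1, let F be a probability measure on [0,∞)^p with ∫ (β₁+⋯+β_p) F(dβ) < ∞, let γ₁,…,γ_p ≥ 0, let ρ₀ be a Lévy measure on (0,∞), and let ρ be the compound Lévy measure built from (F, ρ₀, γ). Let M(t₁,…,t_p) = ∫ e^{Σ_{k=1}^p t_k β_k} F(dβ) denote the moment generating function of F, which is finite on the nonpositive orthant. Then for all t₁,…,t_p ≥ 0, ∫_{[0,∞)^p} (1 - e^{-Σ_{k=1}^p t_k w_k}) ρ(dw₁,…,dw_p) = ∫₀^∞ [M(-w₀γ₁,…,-w₀γ_p)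 − M(-w₀(t₁+γ₁),…,-w₀(t_p+γ_p))] ρ₀(dw₀), and both sides are finite. -/
open MeasureTheory Filter Set Real Topology

/-- The moment generating function of a measure `F` on `[0,∞)^p`. -/
noncomputable def mgfF {p : ℕ} (F : Measure (Fin p → ℝ)) (t : Fin p → ℝ) : ℝ :=
  ∫ β, Real.exp (∑ k, t k * β k) ∂F

/-!
Pulled back along `(w₀, β) ↦ w₀ β`, the left-hand side becomes the integral of
`e^{-w₀ ⟨γ, β⟩} (1 - e^{-w₀ ⟨t, β⟩}) = e^{-w₀ ⟨γ, β⟩} - e^{-w₀ ⟨t + γ, β⟩}` against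
`ρ₀|_(0,∞) ⊗ F`, and integrating out `β` first produces the difference of moment generating
functions. Fubini applies because the integrand is bounded by `min(1, w₀) (1 + ⟨t, β⟩)`, which is
integrable by the Lévy condition on `ρ₀` and the first moment condition on `F`. The Lévy condition
also makes `ρ₀|_(0,∞)` σ-finite, since it has the a.e. finite density `1 / min(1, w)` with respect
to the finite measure `min(1, w) ρ₀(dw)` on `(0,∞)`.
-/

theorem one_sub_exp_neg_le_min (s : ℝ) : 1 - exp (-s) ≤ min 1 s :=
  le_min (by linarith [exp_pos (-s)]) (by linarith [add_one_le_exp (-s)])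

theorem min_one_mul_le {x a : ℝ} (hx : 0 ≤ x) (ha : 0 ≤ a) :
    min 1 (x * a) ≤ min 1 x * (1 + a) := by
  rcases le_total 1 x with h | h
  · rw [min_eq_left h]
    nlinarith [min_le_left 1 (x * a)]
  · rw [min_eq_right h]
    nlinarith [min_le_right 1 (x * a)]

theorem abs_exp_neg_mul_mul_one_sub_exp_neg_le {x a s : ℝ} (hx : 0 ≤ x) (ha : 0 ≤ a)
    (hs : 0 ≤ s) : |exp (-x * a) * (1 - exp (-(x * s)))| ≤ min 1 x * (1 + s) := by
  have hxs : 0 ≤ x * s := mul_nonneg hx hs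
  have htilt : exp (-x * a) ≤ 1 := exp_le_one_iff.2 (by nlinarith)
  have hgap : 0 ≤ 1 - exp (-(x * s)) := by linarith [exp_le_one_iff.2 (neg_nonpos.2 hxs)]
  rw [abs_of_nonneg (mul_nonneg (exp_nonneg _) hgap)]
  calc exp (-x * a) * (1 - exp (-(x * s))) ≤ 1 - exp (-(x * s)) :=
        mul_le_of_le_one_left hgap htilt
    _ ≤ min 1 (x * s) := one_sub_exp_neg_le_min _
    _ ≤ min 1 x * (1 + s) := min_one_mul_le hx hs

theorem sum_mul_mul_left_comm {ι : Type*} [Fintype ι] (x : ℝ) (c β : ι → ℝ) :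
    ∑ k, c k * (x * β k) = x * ∑ k, c k * β k := by
  rw [Finset.mul_sum]
  exact Finset.sum_congr rfl fun k _ => mul_left_comm _ _ _

theorem exp_neg_mul_mul_one_sub_exp_neg_sum {ι : Type*} [Fintype ι] (x : ℝ) (γ t β : ι → ℝ) :
    exp (-x * ∑ k, γ k * β k) * (1 - exp (-∑ k, t k * (x * β k))) =
      exp (∑ k, -(x * γ k) * β k) - exp (∑ k, -(x * (t k + γ k)) * β k) := by
  have hsum : ∀ c : ι → ℝ, ∑ k, -(x * c k) * β k = -x * ∑ k, c k * β k := fun c => by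
    rw [Finset.mul_sum]; exact Finset.sum_congr rfl fun k _ => by ring
  have hsplit : ∑ k, (t k + γ k) * β k = ∑ k, t k * β k + ∑ k, γ k * β k := by
    rw [← Finset.sum_add_distrib]; exact Finset.sum_congr rfl fun k _ => by ring
  rw [hsum, hsum, sum_mul_mul_left_comm, hsplit, mul_sub, mul_one, ← exp_add]
  ring_nf

section NonnegCoordinates

variable {ι : Type*} [Fintype ι] {F : Measure (ι → ℝ)}

theorem integrable_apply_of_integrable_sum (hF : ∀ᵐ β ∂F, ∀ k, 0 ≤ β k) (hsum : Integrable (fun β => ∑ k, β k) F) (k : ι) :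
    Integrable (fun β => β k) F := by
  refine hsum.mono' (measurable_pi_apply k).aestronglyMeasurable ?_
  filter_upwards [hF] with β hβ
  rw [norm_of_nonneg (hβ k)]
  exact Finset.single_le_sum (fun j _ => hβ j) (Finset.mem_univ k)

theorem integrable_exp_sum_mul_of_nonpos [IsFiniteMeasure F] (hF : ∀ᵐ β ∂F, ∀ k, 0 ≤ β k)
    {c : ι → ℝ} (hc : ∀ k, c k ≤ 0) :
    Integrable (fun β => exp (∑ k, c k * β k)) F := by
  refine (integrable_const (1 : ℝ)).mono'
    (Continuous.aestronglyMeasurable (by fun_prop)) ?_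
  filter_upwards [hF] with β hβ
  rw [norm_of_nonneg (exp_nonneg _), exp_le_one_iff]
  exact Finset.sum_nonpos fun k _ => mul_nonpos_of_nonpos_of_nonneg (hc k) (hβ k)

end NonnegCoordinates

theorem sigmaFinite_of_lintegral_lt_top {α : Type*} [MeasurableSpace α] {μ : Measure α}
    {f : α → ENNReal} (hf : AEMeasurable f μ) (hf_ne_zero : ∀ᵐ x ∂μ, f x ≠ 0)
    (hf_int : ∫⁻ x, f x ∂μ < ⊤) : SigmaFinite μ := by
  have : IsFiniteMeasure (μ.withDensity f) := isFiniteMeasure_withDensity hf_int.ne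
  rw [← withDensity_inv_same₀ hf hf_ne_zero ((ae_lt_top' hf hf_int.ne).mono fun _ => ne_of_lt)]
  refine SigmaFinite.withDensity_of_ne_top ?_
  filter_upwards [(withDensity_absolutelyContinuous μ f).ae_le hf_ne_zero] with x hx
  exact ENNReal.inv_ne_top.2 hx

theorem sigmaFinite_restrict_Ioi_of_levy {ρ₀ : Measure ℝ}
    (hρ₀ : ∫⁻ w in Ioi (0 : ℝ), ENNReal.ofReal (min 1 w) ∂ρ₀ < ⊤) :
    SigmaFinite (ρ₀.restrict (Ioi 0)) := by
  refine sigmaFinite_of_lintegral_lt_top (by fun_prop) ?_ hρ₀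
  filter_upwards [ae_restrict_mem measurableSet_Ioi] with w (hw : 0 < w)
  simpa using hw

theorem integrable_min_one_of_levy {ρ₀ : Measure ℝ}
    (hρ₀ : ∫⁻ w in Ioi (0 : ℝ), ENNReal.ofReal (min 1 w) ∂ρ₀ < ⊤) :
    Integrable (fun w => min 1 w) (ρ₀.restrict (Ioi 0)) := by
  have hnonneg : 0 ≤ᵐ[ρ₀.restrict (Ioi 0)] fun w => min 1 w := by
    filter_upwards [ae_restrict_mem measurableSet_Ioi] with w (hw : 0 < w)
    exact le_min zero_le_one hw.le
  exact ⟨by fun_prop, (hasFiniteIntegral_iff_ofReal hnonneg).2 hρ₀⟩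

section CompoundLevy

variable {p : ℕ} {F : Measure (Fin p → ℝ)} {ρ₀ : Measure ℝ} {γ : Fin p → ℝ}
  {f : (Fin p → ℝ) → ℝ}

theorem integrable_compoundLevy_iff (hf : Measurable f) :
    Integrable f (compoundLevy F ρ₀ γ) ↔
      Integrable (fun q : ℝ × (Fin p → ℝ) =>
        exp (-q.1 * ∑ k, γ k * q.2 k) * f (fun k => q.1 * q.2 k))
        ((ρ₀.restrict (Ioi 0)).prod F) := by
  rw [compoundLevy, integrable_map_measure hf.aestronglyMeasurable (by fun_prop),
    integrable_withDensity_iff_integrable_smul' (by fun_prop) (ae_of_all _ fun _ => by simp)]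
  simp only [Function.comp_def, ENNReal.toReal_ofReal (exp_nonneg _), smul_eq_mul]

theorem integral_compoundLevy (hf : Measurable f) :
    ∫ w, f w ∂compoundLevy F ρ₀ γ =
      ∫ q : ℝ × (Fin p → ℝ), exp (-q.1 * ∑ k, γ k * q.2 k) * f (fun k => q.1 * q.2 k)
        ∂(ρ₀.restrict (Ioi 0)).prod F := by
  rw [compoundLevy, integral_map (by fun_prop) hf.aestronglyMeasurable,
    integral_withDensity_eq_integral_toReal_smul (by fun_prop) (ae_of_all _ fun _ => by simp)]
  simp only [ENNReal.toReal_ofReal (exp_nonneg _), smul_eq_mul]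

end CompoundLevy

theorem integrable_one_sub_exp_compoundLevy {p : ℕ} {F : Measure (Fin p → ℝ)}
    [IsFiniteMeasure F] (hF : ∀ᵐ β ∂F, ∀ k, 0 ≤ β k)
    (hFmom : Integrable (fun β => ∑ k, β k) F) {γ : Fin p → ℝ} (hγ : ∀ k, 0 ≤ γ k)
    {ρ₀ : Measure ℝ} (hρ₀ : ∫⁻ w in Ioi (0 : ℝ), ENNReal.ofReal (min 1 w) ∂ρ₀ < ⊤)
    {t : Fin p → ℝ} (ht : ∀ k, 0 ≤ t k) :
    Integrable (fun w => 1 - exp (-∑ k, t k * w k)) (compoundLevy F ρ₀ γ) := by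
  have := sigmaFinite_restrict_Ioi_of_levy hρ₀
  rw [integrable_compoundLevy_iff (by fun_prop)]
  have hbound : Integrable (fun q : ℝ × (Fin p → ℝ) => min 1 q.1 * (1 + ∑ k, t k * q.2 k))
      ((ρ₀.restrict (Ioi 0)).prod F) :=
    (integrable_min_one_of_levy hρ₀).mul_prod <| (integrable_const 1).add <|
      integrable_finsetSum _ fun k _ =>
        (integrable_apply_of_integrable_sum hF hFmom k).const_mul (t k)
  refine hbound.mono' (Continuous.aestronglyMeasurable (by fun_prop)) ?_
  have hw₀ : ∀ᵐ w₀ ∂ρ₀.restrict (Ioi 0), 0 ≤ w₀ :=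
    (ae_restrict_mem measurableSet_Ioi).mono fun _ hw => le_of_lt hw
  filter_upwards [Measure.quasiMeasurePreserving_fst.ae hw₀,
    Measure.quasiMeasurePreserving_snd.ae hF] with ⟨w₀, β⟩ (hw₀ : 0 ≤ w₀) (hβ : ∀ k, 0 ≤ β k)
  rw [Real.norm_eq_abs, sum_mul_mul_left_comm]
  exact abs_exp_neg_mul_mul_one_sub_exp_neg_le hw₀
    (Finset.sum_nonneg fun k _ => mul_nonneg (hγ k) (hβ k))
    (Finset.sum_nonneg fun k _ => mul_nonneg (ht k) (hβ k))

theorem laplace_exponent_compound_general (p : ℕ)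
    (F : Measure (Fin p → ℝ)) [IsProbabilityMeasure F]
    (hFsupp : F {β | ∃ k, β k < 0} = 0)
    (hFmom : Integrable (fun β => ∑ k, β k) F)
    (γ : Fin p → ℝ) (hγ : ∀ k, 0 ≤ γ k)
    (ρ₀ : Measure ℝ)
    (hρ₀levy : ∫⁻ w in Set.Ioi (0 : ℝ), ENNReal.ofReal (min 1 w) ∂ρ₀ < ⊤)
    (t : Fin p → ℝ) (ht : ∀ k, 0 ≤ t k) :
    Integrable (fun w => 1 - Real.exp (-∑ k, t k * w k)) (compoundLevy F ρ₀ γ) ∧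
    IntegrableOn (fun w₀ =>
        mgfF F (fun k => -(w₀ * γ k)) - mgfF F (fun k => -(w₀ * (t k + γ k))))
      (Set.Ioi 0) ρ₀ ∧
    ∫ w, (1 - Real.exp (-∑ k, t k * w k)) ∂(compoundLevy F ρ₀ γ) =
      ∫ w₀ in Set.Ioi (0 : ℝ),
        (mgfF F (fun k => -(w₀ * γ k)) - mgfF F (fun k => -(w₀ * (t k + γ k)))) ∂ρ₀ := by
  have hF : ∀ᵐ β ∂F, ∀ k, 0 ≤ β k := by
    simpa [ae_iff, not_le] using hFsupp
  have := sigmaFinite_restrict_Ioi_of_levy hρ₀levy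
  have hmeas : Measurable fun w : Fin p → ℝ => 1 - exp (-∑ k, t k * w k) := by fun_prop
  have hint := integrable_one_sub_exp_compoundLevy hF hFmom hγ hρ₀levy ht
  have hprod := (integrable_compoundLevy_iff hmeas).1 hint
  simp only [exp_neg_mul_mul_one_sub_exp_neg_sum] at hprod
  have hinner : ∀ᵐ w₀ ∂ρ₀.restrict (Ioi 0),
      ∫ β, (exp (∑ k, -(w₀ * γ k) * β k) - exp (∑ k, -(w₀ * (t k + γ k)) * β k)) ∂F =
        mgfF F (fun k => -(w₀ * γ k)) - mgfF F (fun k => -(w₀ * (t k + γ k))) := by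
    filter_upwards [ae_restrict_mem measurableSet_Ioi] with w₀ (hw₀ : 0 < w₀)
    have hc : ∀ c : Fin p → ℝ, (∀ k, 0 ≤ c k) → ∀ k, -(w₀ * c k) ≤ 0 := fun c hc k =>
      neg_nonpos.2 (mul_nonneg hw₀.le (hc k))
    exact integral_sub (integrable_exp_sum_mul_of_nonpos hF (hc γ hγ))
      (integrable_exp_sum_mul_of_nonpos hF (hc _ fun k => add_nonneg (ht k) (hγ k)))
  refine ⟨hint, hprod.integral_prod_left.congr hinner, ?_⟩
  simp only [integral_compoundLevy hmeas, exp_neg_mul_mul_one_sub_exp_neg_sum]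
  rw [integral_prod _ hprod]
  exact integral_congr_ae hinner

/-- Let `ρ` be the compound Lévy measure built from a probability measure
`F` on `[0,∞)^p` with finite first moment, tilting parameters `γ_k ≥ 0` and a base Lévy
measure `ρ₀` on `(0,∞)`. Then for all `t₁,…,t_p ≥ 0`,
`∫ (1 - e^{-Σ_k t_k w_k}) ρ(dw) = ∫₀^∞ [M(-w₀ γ) - M(-w₀ (t + γ))] ρ₀(dw₀)`,
where `M` is the moment generating function of `F`, and both sides are finite. -/
theorem laplace_exponent_compound (p : ℕ) (hp : 1 ≤ p)
    (F : Measure (Fin p → ℝ)) [IsProbabilityMeasure F]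
    (hFsupp : F {β | ∃ k, β k < 0} = 0)
    (hFmom : Integrable (fun β => ∑ k, β k) F)
    (γ : Fin p → ℝ) (hγ : ∀ k, 0 ≤ γ k)
    (ρ₀ : Measure ℝ) (hρ₀supp : ρ₀ (Set.Iic 0) = 0)
    (hρ₀levy : ∫⁻ w in Set.Ioi (0 : ℝ), ENNReal.ofReal (min 1 w) ∂ρ₀ < ⊤)
    (t : Fin p → ℝ) (ht : ∀ k, 0 ≤ t k) :
    Integrable (fun w => 1 - Real.exp (-∑ k, t k * w k)) (compoundLevy F ρ₀ γ) ∧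
    IntegrableOn (fun w₀ =>
        mgfF F (fun k => -(w₀ * γ k)) - mgfF F (fun k => -(w₀ * (t k + γ k))))
      (Set.Ioi 0) ρ₀ ∧
    ∫ w, (1 - Real.exp (-∑ k, t k * w k)) ∂(compoundLevy F ρ₀ γ) =
      ∫ w₀ in Set.Ioi (0 : ℝ),
        (mgfF F (fun k => -(w₀ * γ k)) - mgfF F (fun k => -(w₀ * (t k + γ k)))) ∂ρ₀ :=
  laplace_exponent_compound_general p F hFsupp hFmom γ hγ ρ₀ hρ₀levy t ht
end

section
/- Let p ≥ 1, let F be a probability measure on [0,∞)^p with ∫ (β₁+⋯+β_p) F(dβ) < ∞, let γ₁,…,γ_p ≥ 0 with γ_k > 0 for all k, let M(t₁,…,t_p) = ∫ e^{Σ t_k β_k} F(dβ), let ρ₀ be a Lévy measure on (0,∞), and for ε > 0 let ρ_ε be the compound Lévy measure built from (F, ρ₀ restricted to (0,ε), γ). Then for each k ∈ {1,…,p}, ∫_{[0,∞)^p} w_k ρ_ε(dw) = ∫₀^ε w₀ (∂M/∂t_k)(-w₀γ₁, …, -w₀γ_p) ρ₀(dw₀), where ∂M/∂t_k denotes the k-th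 partial derivative of M and (∂M/∂t_k)(t) = ∫ β_k e^{Σ_j t_j β_j} F(dβ). -/
open MeasureTheory Filter Set Real Topology

/-- The `k`-th partial derivative of the moment generating function of a measure `F` on
`[0,∞)^p`, i.e. `(∂M/∂t_k)(t) = ∫ β_k e^{Σ_j t_j β_j} F(dβ)`. -/
noncomputable def mgfPartial {p : ℕ} (F : Measure (Fin p → ℝ)) (k : Fin p) (t : Fin p → ℝ) :
    ℝ :=
  ∫ β, β k * Real.exp (∑ j, t j * β j) ∂F

/-- Let `ρ_ε` be the compound Lévy measure built from a probability measure
`F` on `[0,∞)^p` with finite first moment, tilting parameters `γ_k > 0`, and the base Lévy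
measure `ρ₀` restricted to `(0,ε)`. Then for each `k`,
`∫ w_k ρ_ε(dw) = ∫₀^ε w₀ (∂M/∂t_k)(-w₀ γ₁, …, -w₀ γ_p) ρ₀(dw₀)`, where
`(∂M/∂t_k)(t) = ∫ β_k e^{Σ_j t_j β_j} F(dβ)` is the `k`-th partial derivative of the moment
generating function of `F`. -/
theorem compound_levy_first_moment (p : ℕ) (hp : 1 ≤ p)
    (F : Measure (Fin p → ℝ)) [IsProbabilityMeasure F]
    (hFsupp : F {β | ∃ k, β k < 0} = 0)
    (hFmom : Integrable (fun β => ∑ k, β k) F)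
    (γ : Fin p → ℝ) (hγ : ∀ k, 0 < γ k)
    (ρ₀ : Measure ℝ) (hρ₀supp : ρ₀ (Set.Iic 0) = 0)
    (hρ₀levy : ∫⁻ w in Set.Ioi (0 : ℝ), ENNReal.ofReal (min 1 w) ∂ρ₀ < ⊤)
    (ε : ℝ) (hε : 0 < ε) (k : Fin p) :
    ∫ w, w k ∂(compoundLevy F (ρ₀.restrict (Set.Ioo 0 ε)) γ) =
      ∫ w₀ in Set.Ioo (0 : ℝ) ε, w₀ * mgfPartial F k (fun j => -(w₀ * γ j)) ∂ρ₀ := by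
  set μ := ρ₀.restrict (Set.Ioo 0 ε) with hμ
  have hrr : (ρ₀.restrict (Set.Ioo 0 ε)).restrict (Set.Ioi 0) = μ := by
    rw [Measure.restrict_restrict measurableSet_Ioi,
      Set.inter_eq_self_of_subset_right Set.Ioo_subset_Ioi_self]
  -- sigma-finiteness of μ
  have hfin : ∀ δ : ℝ, 0 < δ → ρ₀ (Set.Ioo δ ε) < ⊤ := by
    intro δ hδ
    by_contra h
    push_neg at h
    have htop : ρ₀ (Set.Ioo δ ε) = ⊤ := top_le_iff.mp h
    have hle : ENNReal.ofReal (min 1 δ) * ρ₀ (Set.Ioo δ ε)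
        ≤ ∫⁻ w in Set.Ioi (0:ℝ), ENNReal.ofReal (min 1 w) ∂ρ₀ := by
      calc ENNReal.ofReal (min 1 δ) * ρ₀ (Set.Ioo δ ε)
          = ∫⁻ _ in Set.Ioo δ ε, ENNReal.ofReal (min 1 δ) ∂ρ₀ :=
            (setLIntegral_const _ _).symm
        _ ≤ ∫⁻ w in Set.Ioo δ ε, ENNReal.ofReal (min 1 w) ∂ρ₀ := by
            refine setLIntegral_mono (by fun_prop) fun w hw => ?_
            exact ENNReal.ofReal_le_ofReal (le_min (min_le_left _ _)
              (le_trans (min_le_right _ _) hw.1.le))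
        _ ≤ ∫⁻ w in Set.Ioi (0:ℝ), ENNReal.ofReal (min 1 w) ∂ρ₀ :=
            lintegral_mono' (Measure.restrict_mono
              (fun x hx => lt_trans hδ hx.1) le_rfl) le_rfl
    rw [htop, ENNReal.mul_top (by simp [hδ, lt_min_iff])] at hle
    exact hρ₀levy.ne (top_le_iff.mp hle)
  haveI : SigmaFinite μ := by
    refine ⟨⟨⟨fun n => Set.Ioo (ε / (n + 2)) ε ∪ (Set.Ioo 0 ε)ᶜ,
      fun _ => trivial, fun n => ?_, ?_⟩⟩⟩
    · refine lt_of_le_of_lt (measure_union_le _ _) ?_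
      have h1 : μ (Set.Ioo (ε / (n + 2)) ε) < ⊤ := by
        rw [hμ, Measure.restrict_apply measurableSet_Ioo]
        exact lt_of_le_of_lt (measure_mono Set.inter_subset_left)
          (hfin _ (by positivity))
      have h2 : μ ((Set.Ioo (0:ℝ) ε)ᶜ) = 0 := by
        rw [hμ, Measure.restrict_apply (measurableSet_Ioo.compl)]
        simp
      rw [h2]
      simpa using h1
    · refine Set.eq_univ_of_forall fun x => ?_
      by_cases hx : x ∈ Set.Ioo (0:ℝ) ε
      · obtain ⟨n, hn⟩ := exists_nat_gt (ε / x)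
        refine Set.mem_iUnion.mpr ⟨n, Or.inl ⟨?_, hx.2⟩⟩
        rw [div_lt_iff₀ (by positivity)]
        rw [div_lt_iff₀ hx.1] at hn
        nlinarith [hx.1]
      · exact Set.mem_iUnion.mpr ⟨0, Or.inr hx⟩
  -- measurability helpers
  have msum : Measurable (fun q : ℝ × (Fin p → ℝ) => ∑ j, γ j * q.2 j) :=
    Finset.measurable_sum _ fun j _ =>
      measurable_const.mul ((measurable_pi_apply j).comp measurable_snd)
  have mexp : Measurable (fun q : ℝ × (Fin p → ℝ) =>
      Real.exp (-q.1 * ∑ j, γ j * q.2 j)) := (measurable_fst.neg.mul msum).exp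
  have mT : Measurable (fun q : ℝ × (Fin p → ℝ) => fun k => q.1 * q.2 k) :=
    measurable_pi_lambda _ fun j =>
      measurable_fst.mul ((measurable_pi_apply j).comp measurable_snd)
  have mg : Measurable (fun q : ℝ × (Fin p → ℝ) =>
      Real.exp (-q.1 * ∑ j, γ j * q.2 j) * (q.1 * q.2 k)) :=
    mexp.mul (measurable_fst.mul ((measurable_pi_apply k).comp measurable_snd))
  -- a.e. facts
  have hFae : ∀ᵐ β ∂F, ∀ j, 0 ≤ β j := by
    rw [ae_iff]
    convert hFsupp using 2
    ext β
    simp [not_le]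
  have hμae : ∀ᵐ w ∂μ, w ∈ Set.Ioo 0 ε := ae_restrict_mem measurableSet_Ioo
  have haeprod : ∀ᵐ q ∂(μ.prod F), q.1 ∈ Set.Ioo 0 ε ∧ ∀ j, 0 ≤ q.2 j := by
    rw [Measure.ae_prod_iff_ae_ae]
    · filter_upwards [hμae] with w hw
      filter_upwards [hFae] with β hβ
      exact ⟨hw, hβ⟩
    · exact (measurable_fst (measurableSet_Ioo)).inter <| by
        have : MeasurableSet {β : Fin p → ℝ | ∀ j, 0 ≤ β j} := by
          have : {β : Fin p → ℝ | ∀ j, 0 ≤ β j} = ⋂ j, {β | 0 ≤ β j} := by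
            ext; simp
          rw [this]
          exact MeasurableSet.iInter fun j => measurableSet_le measurable_const
            (measurable_pi_apply j)
        exact measurable_snd this
  -- integrability of id on μ
  have hid : Integrable (fun w : ℝ => w) μ := by
    refine ⟨aestronglyMeasurable_id, ?_⟩
    rw [hasFiniteIntegral_iff_ofReal (hμae.mono fun w hw => hw.1.le)]
    have hb : ∫⁻ w, ENNReal.ofReal w ∂μ ≤ ∫⁻ w in Set.Ioo 0 ε,
        ENNReal.ofReal (max 1 ε) * ENNReal.ofReal (min 1 w) ∂ρ₀ := by
      rw [hμ]
      refine setLIntegral_mono (by fun_prop) fun w hw => ?_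
      have h0 : (0:ℝ) < w := hw.1
      have hbound : w ≤ max 1 ε * min 1 w := by
        rcases le_total w 1 with h | h
        · rw [min_eq_right h]
          nlinarith [le_max_left (1:ℝ) ε]
        · rw [min_eq_left h, mul_one]
          exact le_trans hw.2.le (le_max_right _ _)
      calc ENNReal.ofReal w ≤ ENNReal.ofReal (max 1 ε * min 1 w) :=
            ENNReal.ofReal_le_ofReal hbound
        _ = ENNReal.ofReal (max 1 ε) * ENNReal.ofReal (min 1 w) :=
            ENNReal.ofReal_mul (by positivity)
    refine lt_of_le_of_lt hb ?_
    rw [lintegral_const_mul' _ _ ENNReal.ofReal_ne_top]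
    refine ENNReal.mul_lt_top ENNReal.ofReal_lt_top ?_
    exact lt_of_le_of_lt
      (lintegral_mono' (Measure.restrict_mono Set.Ioo_subset_Ioi_self le_rfl) le_rfl) hρ₀levy
  -- integrability of the main integrand on the product
  have hint : Integrable (fun q : ℝ × (Fin p → ℝ) =>
      Real.exp (-q.1 * ∑ j, γ j * q.2 j) * (q.1 * q.2 k)) (μ.prod F) := by
    have hbnd : Integrable (fun q : ℝ × (Fin p → ℝ) => q.1 * ∑ j, q.2 j) (μ.prod F) :=
      hid.mul_prod hFmom
    refine hbnd.mono' mg.aestronglyMeasurable ?_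
    filter_upwards [haeprod] with q hq
    obtain ⟨⟨hq1, _⟩, hq2⟩ := hq
    have hsum : (0:ℝ) ≤ ∑ j, γ j * q.2 j :=
      Finset.sum_nonneg fun j _ => mul_nonneg (hγ j).le (hq2 j)
    have hexp : Real.exp (-q.1 * ∑ j, γ j * q.2 j) ≤ 1 := by
      rw [Real.exp_le_one_iff]
      nlinarith
    have hβk : q.2 k ≤ ∑ j, q.2 j :=
      Finset.single_le_sum (fun j _ => hq2 j) (Finset.mem_univ k)
    rw [Real.norm_eq_abs, abs_mul, abs_mul]
    rw [abs_of_nonneg (Real.exp_nonneg _), abs_of_pos hq1, abs_of_nonneg (hq2 k)]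
    calc Real.exp (-q.1 * ∑ j, γ j * q.2 j) * (q.1 * q.2 k) ≤ 1 * (q.1 * q.2 k) :=
          mul_le_mul_of_nonneg_right hexp (mul_nonneg hq1.le (hq2 k))
      _ = q.1 * q.2 k := one_mul _
      _ ≤ q.1 * ∑ j, q.2 j := mul_le_mul_of_nonneg_left hβk hq1.le
  -- main computation
  rw [compoundLevy, hrr]
  rw [integral_map mT.aemeasurable ((measurable_pi_apply k).aestronglyMeasurable)]
  rw [show (fun q : ℝ × (Fin p → ℝ) => ENNReal.ofReal
        (Real.exp (-q.1 * ∑ j, γ j * q.2 j))) = fun q => ((Real.toNNReal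
        (Real.exp (-q.1 * ∑ j, γ j * q.2 j)) : NNReal) : ENNReal) from rfl]
  rw [integral_withDensity_eq_integral_smul mexp.real_toNNReal]
  have : (fun q : ℝ × (Fin p → ℝ) => Real.toNNReal
      (Real.exp (-q.1 * ∑ j, γ j * q.2 j)) • ((fun k' => q.1 * q.2 k') k)) =
      fun q => Real.exp (-q.1 * ∑ j, γ j * q.2 j) * (q.1 * q.2 k) := by
    funext q
    rw [NNReal.smul_def, Real.coe_toNNReal _ (Real.exp_nonneg _)]
    rfl
  rw [this, integral_prod _ hint]
  refine setIntegral_congr_fun measurableSet_Ioo fun w₀ _ => ?_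
  rw [mgfPartial, ← integral_const_mul]
  refine integral_congr_ae (Filter.Eventually.of_forall fun β => ?_)
  have hS : ∑ j, -(w₀ * γ j) * β j = -w₀ * ∑ j, γ j * β j := by
    rw [Finset.mul_sum]
    exact Finset.sum_congr rfl fun j _ => by ring
  show Real.exp (-w₀ * ∑ j, γ j * β j) * (w₀ * β k) =
    w₀ * (β k * Real.exp (∑ j, -(w₀ * γ j) * β j))
  rw [hS]
  ring
end
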